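/- arXiv:2506.13626 — 2 statements merged into one kernel-verified Lean document; each statement's English description precedes it below -/
import Mathlib

section
/- Congestion-control sufficiency (Theorem 4). Suppose r̄_i(d,m) ≥ 0 are demand limits and each utility U_{idm} : [0, r̄_i(d,m)] → ℝ is nondecreasing, concave and continuously differentiable with U_{idm}(0) = 0. Suppose admitted rates r_i(d,m) ∈ [0, r̄_i(d,m)] and a feasible forwarding strategy φ are given, with nonnegative traffic vectors t⁻, t⁺ solving the traffic equations at input r, marginal vectors ρ, σ solving the marginal recursions, such that: (a) the sufficiency condition (8) holds at φ; and (b) for every i and (d,m): r_i(d,m) > 0 implies ρ_i(d,m) ≤ U'_{idm}(r_i(d,m)), and r_i(d,m) < r̄_i(d,m) implies ρ_i(d,m) ≥ U'_{idm}(r_i(d,m)). Then (r, φ) maximizes the utility-minus-cost objective: for every choice of admitted rates r* with r*_i(d,m) ∈ [0, r̄_i(d,m)] and every flow-feasible competitor (f⁻*, f⁺*, g*) at input rates r*, one has Σ_{i,(d,m)} U_{idm}(r_i(d,m)) − [Σ_{(i,j)∈E} D_{ij}(F_{ij}) + Σ_{i∈V} C_i(G_i)] ≥ Σ_{i,(d,m)}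 U_{idm}(r*_i(d,m)) − [Σ_{(i,j)∈E} D_{ij}(F*_{ij}) + Σ_{i∈V} C_i(G*_i)]. -/
/-!
For each task the marginals ρ and σ are convex combinations of the δ's, so the sufficiency
condition (8) makes them node potentials: ρ_i ≤ δ⁻_ij and σ_i ≤ δ⁺_ij, with equality wherever φ
routes traffic. Summing flow conservation against these potentials, the value Σ_i ρ_i r*_i of
any admitted input is at most the linearized cost Σ D'_ij(F_ij) F*_ij + Σ C'_i(G_i) G*_i of any
competitor carrying it, with equality for the flows of φ itself. Concavity of U together with
the admission thresholds gives U(r*) - U(r) ≤ ρ (r* - r), and convexity of D and C bounds the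
increase of cost from below by its linearization at (F, G); chaining the three gives the claim.
-/

open Finset

section GraphSums

theorem sum_edges_swap {V β : Type*} [AddCommMonoid β] {E : Finset (V × V)}
    (hE : ∀ i j, (i, j) ∈ E → (j, i) ∈ E) (h : V → V → β) :
    ∑ e ∈ E, h e.1 e.2 = ∑ e ∈ E, h e.2 e.1 :=
  sum_nbij' Prod.swap Prod.swap (fun _ he => hE _ _ he) (fun _ he => hE _ _ he)
    (fun _ _ => rfl) (fun _ _ => rfl) (fun _ _ => rfl)

variable {V : Type*} [Fintype V] [DecidableEq V] (E : Finset (V × V))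

abbrev neighbors (i : V) : Finset V := univ.filter fun j => (i, j) ∈ E

variable {E}

theorem sum_edges_eq_sum_sum_neighbors {β : Type*} [AddCommMonoid β] (h : V → V → β) :
    ∑ e ∈ E, h e.1 e.2 = ∑ i, ∑ j ∈ neighbors E i, h i j :=
  sum_finset_product' E univ (neighbors E) (by simp)

theorem sum_neighbors_eq_sum {β : Type*} [AddCommMonoid β] {i : V} {h : V → β}
    (hh : ∀ j, (i, j) ∉ E → h j = 0) : ∑ j ∈ neighbors E i, h j = ∑ j, h j :=
  sum_filter_of_ne fun j _ hj => by_contra fun hij => hj (hh j hij)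

theorem sum_mul_netOutflow {R : Type*} [CommRing R] (hE : ∀ i j, (i, j) ∈ E → (j, i) ∈ E)
    (π : V → R) (f : V → V → R) :
    ∑ i, π i * ((∑ j ∈ neighbors E i, f i j) - ∑ j ∈ neighbors E i, f j i)
      = ∑ e ∈ E, f e.1 e.2 * (π e.1 - π e.2) := by
  simp only [mul_sub, mul_sum, sum_sub_distrib]
  rw [← sum_edges_eq_sum_sum_neighbors (fun i j => π i * f i j),
    ← sum_edges_eq_sum_sum_neighbors (fun i j => π i * f j i),
    sum_edges_swap hE (fun i j => π i * f j i)]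
  congr 1 <;> exact sum_congr rfl fun _ _ => mul_comm _ _

end GraphSums

theorem sum_insert_none_image_some {α β : Type*} [DecidableEq α] [AddCommMonoid β]
    (t : Finset α) (f : Option α → β) :
    ∑ k ∈ insert none (t.image some), f k = f none + ∑ j ∈ t, f (some j) := by
  rw [sum_insert (by simp), sum_image fun _ _ _ _ h => Option.some_injective _ h]

section WeightedMean

variable {ι : Type*} {s : Finset ι} {p δ : ι → ℝ}

theorem sum_mul_le_of_support_minimizes (hp0 : ∀ k ∈ s, 0 ≤ p k) (hp1 : ∑ k ∈ s, p k = 1)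
    (hmin : ∀ k ∈ s, 0 < p k → ∀ l ∈ s, δ k ≤ δ l) {j : ι} (hj : j ∈ s) :
    ∑ k ∈ s, p k * δ k ≤ δ j :=
  calc ∑ k ∈ s, p k * δ k ≤ ∑ k ∈ s, p k * δ j := by
        refine sum_le_sum fun k hk => ?_
        rcases (hp0 k hk).eq_or_lt with h0 | hpos
        · simp [← h0]
        · exact mul_le_mul_of_nonneg_left (hmin k hk hpos j hj) hpos.le
    _ = δ j := by rw [← sum_mul, hp1, one_mul]

theorem le_and_mul_sub_eq_zero_of_support_minimizes {x : ℝ} (hx : x = ∑ k ∈ s, p k * δ k)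
    (hp0 : ∀ k ∈ s, 0 ≤ p k) (hp1 : ∑ k ∈ s, p k = 1)
    (hmin : ∀ k ∈ s, 0 < p k → ∀ l ∈ s, δ k ≤ δ l) {j : ι} (hj : j ∈ s) :
    x ≤ δ j ∧ p j * (δ j - x) = 0 := by
  subst hx
  refine ⟨sum_mul_le_of_support_minimizes hp0 hp1 hmin hj, ?_⟩
  rcases (hp0 j hj).eq_or_lt with h0 | hpos
  · simp [← h0]
  have hge : δ j ≤ ∑ k ∈ s, p k * δ k :=
    calc δ j = ∑ k ∈ s, p k * δ j := by rw [← sum_mul, hp1, one_mul]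
      _ ≤ ∑ k ∈ s, p k * δ k :=
        sum_le_sum fun k hk => mul_le_mul_of_nonneg_left (hmin j hj hpos k hk) (hp0 k hk)
  rw [le_antisymm hge (sum_mul_le_of_support_minimizes hp0 hp1 hmin hj), sub_self, mul_zero]

end WeightedMean

section Forwarding

variable {V : Type*} [Fintype V] [DecidableEq V] {E : Finset (V × V)} {i : V} {x : ℝ}

theorem le_and_mul_sub_eq_zero_of_sufficiency_data {φ δ : Option V → ℝ}
    (hx : x = ∑ j ∈ neighbors E i, φ (some j) * δ (some j) + φ none * δ none)
    (hφ0 : ∀ k, 0 ≤ φ k) (hφE : ∀ j, (i, j) ∉ E → φ (some j) = 0)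
    (hφ1 : φ none + ∑ j, φ (some j) = 1)
    (hsuff : ∀ k ∈ insert none ((neighbors E i).image some), 0 < φ k →
      ∀ l ∈ insert none ((neighbors E i).image some), δ k ≤ δ l)
    {k : Option V} (hk : k ∈ insert none ((neighbors E i).image some)) :
    x ≤ δ k ∧ φ k * (δ k - x) = 0 :=
  le_and_mul_sub_eq_zero_of_support_minimizes
    (by rw [sum_insert_none_image_some, hx, add_comm]) (fun k _ => hφ0 k)
    (by rw [sum_insert_none_image_some, sum_neighbors_eq_sum hφE, hφ1]) hsuff hk

theorem le_and_mul_sub_eq_zero_of_sufficiency_result {ψ δ : V → ℝ}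
    (hx : x = ∑ j ∈ neighbors E i, ψ j * δ j) (hψ0 : ∀ j, 0 ≤ ψ j)
    (hψE : ∀ j, (i, j) ∉ E → ψ j = 0) (hψ1 : ∑ j, ψ j = 1)
    (hsuff : ∀ j, (i, j) ∈ E → 0 < ψ j → ∀ k, (i, k) ∈ E → δ j ≤ δ k)
    {j : V} (hj : (i, j) ∈ E) : x ≤ δ j ∧ ψ j * (δ j - x) = 0 :=
  le_and_mul_sub_eq_zero_of_support_minimizes hx (fun k _ => hψ0 k)
    ((sum_neighbors_eq_sum hψE).trans hψ1)
    (fun k hk hpos l hl => hsuff k (by simpa using hk) hpos l (by simpa using hl))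
    (by simpa using hj)

end Forwarding

section Duality

variable {V : Type*} [Fintype V] [DecidableEq V] {E : Finset (V × V)} {d : V}
  {ρ σ : V → ℝ} {a b : V → V → ℝ} {c : V → ℝ} {fm fp : V → V → ℝ} {g r : V → ℝ}

/- With `a`, `b`, `c` the marginal link and computation costs, the three reduced costs below are
δ⁻_ij - ρ_i, δ⁺_ij - σ_i and δ⁻_i0 - ρ_i. -/
theorem linearCost_eq_sum_mul_add_reducedCost (hE : ∀ i j, (i, j) ∈ E → (j, i) ∈ E)
    (hσd : σ d = 0)
    (hm : ∀ i, (∑ j ∈ neighbors E i, fm i j) + g i = (∑ j ∈ neighbors E i, fm j i) + r i)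
    (hp : ∀ i, i ≠ d → ∑ j ∈ neighbors E i, fp i j = (∑ j ∈ neighbors E i, fp j i) + g i) :
    ∑ e ∈ E, (a e.1 e.2 * fm e.1 e.2 + b e.1 e.2 * fp e.1 e.2) + ∑ i, c i * g i
      = ∑ i, ρ i * r i
        + (∑ e ∈ E, (fm e.1 e.2 * (a e.1 e.2 + ρ e.2 - ρ e.1)
              + fp e.1 e.2 * (b e.1 e.2 + σ e.2 - σ e.1))
          + ∑ i, g i * (c i + σ i - ρ i)) := by
  have hρ : ∑ i, ρ i * r i = ∑ e ∈ E, fm e.1 e.2 * (ρ e.1 - ρ e.2) + ∑ i, ρ i * g i := by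
    rw [← sum_mul_netOutflow hE, ← sum_add_distrib]
    exact sum_congr rfl fun i _ => by linear_combination -ρ i * hm i
  have hσ : ∑ i, σ i * g i = ∑ e ∈ E, fp e.1 e.2 * (σ e.1 - σ e.2) := by
    rw [← sum_mul_netOutflow hE]
    refine sum_congr rfl fun i _ => ?_
    rcases eq_or_ne i d with rfl | hi
    · simp [hσd]
    · linear_combination -σ i * hp i hi
  rw [hρ]
  have hedges : ∑ e ∈ E, (fm e.1 e.2 * (a e.1 e.2 + ρ e.2 - ρ e.1)
        + fp e.1 e.2 * (b e.1 e.2 + σ e.2 - σ e.1))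
      = ∑ e ∈ E, (a e.1 e.2 * fm e.1 e.2 + b e.1 e.2 * fp e.1 e.2)
        - ∑ e ∈ E, fm e.1 e.2 * (ρ e.1 - ρ e.2) - ∑ e ∈ E, fp e.1 e.2 * (σ e.1 - σ e.2) := by
    rw [← sum_sub_distrib, ← sum_sub_distrib]
    exact sum_congr rfl fun e _ => by ring
  have hnodes : ∑ i, g i * (c i + σ i - ρ i)
      = ∑ i, c i * g i + ∑ i, σ i * g i - ∑ i, ρ i * g i := by
    rw [← sum_add_distrib, ← sum_sub_distrib]
    exact sum_congr rfl fun i _ => by ring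
  linarith

theorem sum_mul_le_linearCost (hE : ∀ i j, (i, j) ∈ E → (j, i) ∈ E) (hσd : σ d = 0)
    (hm : ∀ i, (∑ j ∈ neighbors E i, fm i j) + g i = (∑ j ∈ neighbors E i, fm j i) + r i)
    (hp : ∀ i, i ≠ d → ∑ j ∈ neighbors E i, fp i j = (∑ j ∈ neighbors E i, fp j i) + g i)
    (hpd : ∀ j, fp d j = 0) (hfm : ∀ i j, 0 ≤ fm i j) (hfp : ∀ i j, 0 ≤ fp i j)
    (hg : ∀ i, 0 ≤ g i) (ha : ∀ i j, (i, j) ∈ E → ρ i ≤ a i j + ρ j)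
    (hb : ∀ i j, i ≠ d → (i, j) ∈ E → σ i ≤ b i j + σ j) (hc : ∀ i, ρ i ≤ c i + σ i) :
    ∑ i, ρ i * r i
      ≤ ∑ e ∈ E, (a e.1 e.2 * fm e.1 e.2 + b e.1 e.2 * fp e.1 e.2) + ∑ i, c i * g i := by
  rw [linearCost_eq_sum_mul_add_reducedCost hE hσd hm hp, le_add_iff_nonneg_right]
  refine add_nonneg (sum_nonneg fun e he => add_nonneg ?_ ?_)
    (sum_nonneg fun i _ => mul_nonneg (hg i) (by linarith [hc i]))
  · exact mul_nonneg (hfm _ _) (by linarith [ha _ _ he])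
  · rcases eq_or_ne e.1 d with hd | hd
    · simp [hd, hpd]
    · exact mul_nonneg (hfp _ _) (by linarith [hb _ _ hd he])

theorem sum_mul_eq_linearCost (hE : ∀ i j, (i, j) ∈ E → (j, i) ∈ E) (hσd : σ d = 0)
    (hm : ∀ i, (∑ j ∈ neighbors E i, fm i j) + g i = (∑ j ∈ neighbors E i, fm j i) + r i)
    (hp : ∀ i, i ≠ d → ∑ j ∈ neighbors E i, fp i j = (∑ j ∈ neighbors E i, fp j i) + g i)
    (hpd : ∀ j, fp d j = 0) (ha : ∀ i j, (i, j) ∈ E → fm i j * (a i j + ρ j - ρ i) = 0)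
    (hb : ∀ i j, i ≠ d → (i, j) ∈ E → fp i j * (b i j + σ j - σ i) = 0)
    (hc : ∀ i, g i * (c i + σ i - ρ i) = 0) :
    ∑ i, ρ i * r i
      = ∑ e ∈ E, (a e.1 e.2 * fm e.1 e.2 + b e.1 e.2 * fp e.1 e.2) + ∑ i, c i * g i := by
  rw [linearCost_eq_sum_mul_add_reducedCost hE hσd hm hp, left_eq_add,
    sum_eq_zero fun i _ => hc i, add_zero]
  refine sum_eq_zero fun e he => ?_
  rw [ha _ _ he, zero_add]
  rcases eq_or_ne e.1 d with hd | hd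
  · simp [hd, hpd]
  · exact hb _ _ hd he

end Duality

section Traffic

variable {V R : Type*} [Fintype V] [DecidableEq V] [CommRing R] {E : Finset (V × V)}

theorem outflow_add_eq_inflow_add_of_traffic (hE : ∀ i j, (i, j) ∈ E → (j, i) ∈ E)
    {φ : V → V → R} (hφE : ∀ i j, (i, j) ∉ E → φ i j = 0) {t s : V → R} {i : V}
    (ht : t i = s i + ∑ j, t j * φ j i) {φ₀ : R} (hφ : φ₀ + ∑ j, φ i j = 1) :
    (∑ j ∈ neighbors E i, t i * φ i j) + t i * φ₀ = (∑ j ∈ neighbors E i, t j * φ j i) + s i := by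
  rw [sum_neighbors_eq_sum fun j hj => by rw [hφE i j hj, mul_zero],
    sum_neighbors_eq_sum fun j hj => by rw [hφE j i (mt (hE j i) hj), mul_zero], ← mul_sum]
  linear_combination ht + t i * hφ

end Traffic

theorem ConvexOn.mul_sub_le_sub_of_hasDerivWithinAt {S : Set ℝ} {f : ℝ → ℝ} {f' x y : ℝ}
    (hf : ConvexOn ℝ S f) (hx : x ∈ S) (hy : y ∈ S) (hd : HasDerivWithinAt f f' S x) :
    f' * (y - x) ≤ f y - f x := by
  rcases lt_trichotomy x y with hxy | rfl | hxy
  · have := hf.le_slope_of_hasDerivWithinAt hx hy hxy hd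
    rwa [slope_def_field, le_div_iff₀ (sub_pos.2 hxy)] at this
  · simp
  · have := hf.slope_le_of_hasDerivWithinAt hy hx hxy hd
    rwa [slope_comm, slope_def_field, div_le_iff_of_neg (sub_neg.2 hxy)] at this

theorem ConcaveOn.sub_le_mul_sub_of_hasDerivWithinAt {S : Set ℝ} {f : ℝ → ℝ} {f' x y : ℝ}
    (hf : ConcaveOn ℝ S f) (hx : x ∈ S) (hy : y ∈ S) (hd : HasDerivWithinAt f f' S x) :
    f y - f x ≤ f' * (y - x) := by
  have := hf.neg.mul_sub_le_sub_of_hasDerivWithinAt hx hy hd.neg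
  simp only [Pi.neg_apply] at this
  linarith

theorem mul_sub_le_mul_sub_of_threshold {x y xmax u ρ : ℝ} (hx : x ∈ Set.Icc 0 xmax)
    (hy : y ∈ Set.Icc 0 xmax) (hpos : 0 < x → ρ ≤ u) (hlt : x < xmax → u ≤ ρ) :
    u * (y - x) ≤ ρ * (y - x) := by
  rcases lt_trichotomy y x with hyx | rfl | hxy
  · nlinarith [hpos (hy.1.trans_lt hyx)]
  · simp
  · nlinarith [hlt (hxy.trans_le hy.2)]

theorem ConcaveOn.sub_le_mul_sub_of_threshold {xmax x y u ρ : ℝ} {f : ℝ → ℝ}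
    (hf : ConcaveOn ℝ (Set.Icc 0 xmax) f) (hx : x ∈ Set.Icc 0 xmax) (hy : y ∈ Set.Icc 0 xmax)
    (hd : HasDerivWithinAt f u (Set.Icc 0 xmax) x) (hpos : 0 < x → ρ ≤ u)
    (hlt : x < xmax → u ≤ ρ) : f y - f x ≤ ρ * (y - x) :=
  (hf.sub_le_mul_sub_of_hasDerivWithinAt hx hy hd).trans
    (mul_sub_le_mul_sub_of_threshold hx hy hpos hlt)

theorem sum_sub_sum_le_sum_sub_sum {ι : Type*} {s : Finset ι} {f g u v : ι → ℝ}
    (h : ∀ i ∈ s, f i - g i ≤ u i - v i) :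
    ∑ i ∈ s, f i - ∑ i ∈ s, g i ≤ ∑ i ∈ s, u i - ∑ i ∈ s, v i := by
  simpa only [sum_sub_distrib] using sum_le_sum h

theorem sum_mul_sub_sum_mul_le_of_convexOn {ι : Type*} {s : Finset ι} {f f' : ι → ℝ → ℝ}
    (hf : ∀ k ∈ s, ConvexOn ℝ Set.univ (f k)) (hd : ∀ k ∈ s, ∀ x, HasDerivAt (f k) (f' k x) x)
    (x y : ι → ℝ) :
    ∑ k ∈ s, f' k (x k) * y k - ∑ k ∈ s, f' k (x k) * x k
      ≤ ∑ k ∈ s, f k (y k) - ∑ k ∈ s, f k (x k) :=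
  sum_sub_sum_le_sum_sub_sum fun k hk => by
    rw [← mul_sub]
    exact (hf k hk).mul_sub_le_sub_of_hasDerivWithinAt (Set.mem_univ _) (Set.mem_univ _)
      (hd k hk _).hasDerivWithinAt

theorem sum_tasks_linearCost_eq {V M : Type*} [Fintype V] {E : Finset (V × V)}
    {Tsk : Finset (V × M)} {Lm Lp : M → ℝ} {w : V → M → ℝ} (κ : V → V → ℝ) (μ : V → ℝ)
    {fm fp : V → V → V × M → ℝ} {g : V → V × M → ℝ} {F : V → V → ℝ} {G : V → ℝ}
    (hF : ∀ i j, F i j = ∑ dm ∈ Tsk, (Lm dm.2 * fm i j dm + Lp dm.2 * fp i j dm))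
    (hG : ∀ i, G i = ∑ dm ∈ Tsk, w i dm.2 * g i dm) :
    ∑ dm ∈ Tsk, (∑ e ∈ E, (Lm dm.2 * κ e.1 e.2 * fm e.1 e.2 dm
        + Lp dm.2 * κ e.1 e.2 * fp e.1 e.2 dm) + ∑ i, w i dm.2 * μ i * g i dm)
      = ∑ e ∈ E, κ e.1 e.2 * F e.1 e.2 + ∑ i, μ i * G i := by
  simp only [hF, hG, mul_sum]
  rw [sum_comm (s := E), sum_comm (s := univ), ← sum_add_distrib]
  refine sum_congr rfl fun dm _ => ?_
  congr 1 <;> exact sum_congr rfl fun _ _ => by ring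

theorem stmt_11_general
    {V M : Type*} [Fintype V] [DecidableEq V]
    -- network
    (E : Finset (V × V))
    (hEsymm : ∀ i j : V, (i, j) ∈ E → (j, i) ∈ E)
    (Tsk : Finset (V × M))
    (Lm Lp : M → ℝ)
    (w : V → M → ℝ)
    (r : V → V × M → ℝ)
    -- demand limits and utilities
    (rbar : V → V × M → ℝ)
    (U U' : V → V × M → ℝ → ℝ)
    (hUconc : ∀ i dm, ConcaveOn ℝ (Set.Icc 0 (rbar i dm)) (U i dm))
    (hUderiv : ∀ i dm, ∀ x ∈ Set.Icc 0 (rbar i dm),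
      HasDerivWithinAt (U i dm) (U' i dm x) (Set.Icc 0 (rbar i dm)) x)
    -- admitted rates
    (hr_mem : ∀ i dm, r i dm ∈ Set.Icc 0 (rbar i dm))
    -- feasible forwarding strategy
    (φm : V → Option V → V × M → ℝ) (φp : V → V → V × M → ℝ)
    (hφm0 : ∀ i j dm, 0 ≤ φm i j dm)
    (hφp0 : ∀ i j dm, 0 ≤ φp i j dm)
    (hφmE : ∀ i j dm, (i, j) ∉ E → φm i (some j) dm = 0)
    (hφpE : ∀ i j dm, (i, j) ∉ E → φp i j dm = 0)
    (hφmsum : ∀ dm ∈ Tsk, ∀ i : V, φm i none dm + ∑ j, φm i (some j) dm = 1)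
    (hφpsum : ∀ dm ∈ Tsk, ∀ i : V, i ≠ dm.1 → ∑ j, φp i j dm = 1)
    (hφpdest : ∀ dm ∈ Tsk, ∀ j, φp dm.1 j dm = 0)
    -- traffic vectors
    (tm tp : V → V × M → ℝ)
    (g : V → V × M → ℝ) (hg : ∀ i dm, g i dm = tm i dm * φm i none dm)
    (htm : ∀ dm ∈ Tsk, ∀ i : V, tm i dm = r i dm + ∑ j, tm j dm * φm j (some i) dm)
    (htp : ∀ dm ∈ Tsk, ∀ i : V, tp i dm = g i dm + ∑ j, tp j dm * φp j i dm)
    -- link flows and workloads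
    (F : V → V → ℝ)
    (hF : ∀ i j, F i j = ∑ dm ∈ Tsk,
      (Lm dm.2 * (tm i dm * φm i (some j) dm) + Lp dm.2 * (tp i dm * φp i j dm)))
    (G : V → ℝ) (hG : ∀ i, G i = ∑ dm ∈ Tsk, w i dm.2 * g i dm)
    -- costs
    (D D' : V → V → ℝ → ℝ) (C C' : V → ℝ → ℝ)
    (hDconv : ∀ i j, ConvexOn ℝ Set.univ (D i j))
    (hDderiv : ∀ i j x, HasDerivAt (D i j) (D' i j x) x)
    (hCconv : ∀ i, ConvexOn ℝ Set.univ (C i))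
    (hCderiv : ∀ i x, HasDerivAt (C i) (C' i x) x)
    -- marginal vectors
    (σ ρ : V → V × M → ℝ)
    (hσd : ∀ dm ∈ Tsk, σ dm.1 dm = 0)
    (hσ : ∀ dm ∈ Tsk, ∀ i : V, i ≠ dm.1 →
      σ i dm = ∑ j ∈ univ.filter (fun j => (i, j) ∈ E),
        φp i j dm * (Lp dm.2 * D' i j (F i j) + σ j dm))
    (hρ : ∀ dm ∈ Tsk, ∀ i : V,
      ρ i dm = (∑ j ∈ univ.filter (fun j => (i, j) ∈ E),
          φm i (some j) dm * (Lm dm.2 * D' i j (F i j) + ρ j dm))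
        + φm i none dm * (w i dm.2 * C' i (G i) + σ i dm))

    -- marginal link/CPU costs
    (δm : V → Option V → V × M → ℝ) (δp : V → V → V × M → ℝ)
    (hδms : ∀ i j dm, δm i (some j) dm = Lm dm.2 * D' i j (F i j) + ρ j dm)
    (hδmn : ∀ i dm, δm i none dm = w i dm.2 * C' i (G i) + σ i dm)
    (hδp : ∀ i j dm, δp i j dm = Lp dm.2 * D' i j (F i j) + σ j dm)
    -- sufficiency condition (8)
    (hsuffm : ∀ dm ∈ Tsk, ∀ i : V,
      ∀ j ∈ insert (none : Option V) ((univ.filter (fun j => (i, j) ∈ E)).image some),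
        0 < φm i j dm →
        ∀ k ∈ insert (none : Option V) ((univ.filter (fun j => (i, j) ∈ E)).image some),
          δm i j dm ≤ δm i k dm)
    (hsuffp : ∀ dm ∈ Tsk, ∀ i : V, i ≠ dm.1 →
      ∀ j : V, (i, j) ∈ E → 0 < φp i j dm →
        ∀ k : V, (i, k) ∈ E → δp i j dm ≤ δp i k dm)
    -- admission threshold conditions (b)
    (hthr1 : ∀ dm ∈ Tsk, ∀ i : V, 0 < r i dm → ρ i dm ≤ U' i dm (r i dm))
    (hthr2 : ∀ dm ∈ Tsk, ∀ i : V, r i dm < rbar i dm → U' i dm (r i dm) ≤ ρ i dm)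
    -- competitor admitted rates
    (rstar : V → V × M → ℝ) (hrstar : ∀ i dm, rstar i dm ∈ Set.Icc 0 (rbar i dm))
    -- flow-feasible competitor
    (fm' fp' : V → V → V × M → ℝ) (g' : V → V × M → ℝ)
    (hfm'0 : ∀ i j dm, 0 ≤ fm' i j dm) (hfp'0 : ∀ i j dm, 0 ≤ fp' i j dm)
    (hg'0 : ∀ i dm, 0 ≤ g' i dm)
    (hfm'c : ∀ dm ∈ Tsk, ∀ i : V,
      (∑ j ∈ univ.filter (fun j => (i, j) ∈ E), fm' i j dm) + g' i dm
        = (∑ j ∈ univ.filter (fun j => (i, j) ∈ E), fm' j i dm) + rstar i dm)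
    (hfp'c : ∀ dm ∈ Tsk, ∀ i : V, i ≠ dm.1 →
      (∑ j ∈ univ.filter (fun j => (i, j) ∈ E), fp' i j dm)
        = (∑ j ∈ univ.filter (fun j => (i, j) ∈ E), fp' j i dm) + g' i dm)
    (hfp'd : ∀ dm ∈ Tsk, ∀ j, fp' dm.1 j dm = 0)
    (F' : V → V → ℝ)
    (hF' : ∀ i j, F' i j = ∑ dm ∈ Tsk, (Lm dm.2 * fm' i j dm + Lp dm.2 * fp' i j dm))
    (G' : V → ℝ) (hG' : ∀ i, G' i = ∑ dm ∈ Tsk, w i dm.2 * g' i dm)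
    :
    (∑ i, ∑ dm ∈ Tsk, U i dm (rstar i dm))
      - ((∑ e ∈ E, D e.1 e.2 (F' e.1 e.2)) + ∑ i, C i (G' i))
      ≤ (∑ i, ∑ dm ∈ Tsk, U i dm (r i dm))
      - ((∑ e ∈ E, D e.1 e.2 (F e.1 e.2)) + ∑ i, C i (G i)) := by
  have hρ_min : ∀ dm ∈ Tsk, ∀ i, ∀ k ∈ insert none ((neighbors E i).image some),
      ρ i dm ≤ δm i k dm ∧ φm i k dm * (δm i k dm - ρ i dm) = 0 := fun dm hdm i _ hk =>
    le_and_mul_sub_eq_zero_of_sufficiency_data (by simpa only [hδms, hδmn] using hρ dm hdm i)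
      (hφm0 i · dm) (hφmE i · dm) (hφmsum dm hdm i) (hsuffm dm hdm i) hk
  have hσ_min : ∀ dm ∈ Tsk, ∀ i j, i ≠ dm.1 → (i, j) ∈ E →
      σ i dm ≤ δp i j dm ∧ φp i j dm * (δp i j dm - σ i dm) = 0 := fun dm hdm i _ hi hij =>
    le_and_mul_sub_eq_zero_of_sufficiency_result (by simpa only [hδp] using hσ dm hdm i hi)
      (hφp0 i · dm) (hφpE i · dm) (hφpsum dm hdm i hi) (hsuffp dm hdm i hi) hij
  have hvalue_eq : ∑ dm ∈ Tsk, ∑ i, ρ i dm * r i dm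
      = ∑ e ∈ E, D' e.1 e.2 (F e.1 e.2) * F e.1 e.2 + ∑ i, C' i (G i) * G i := by
    rw [← sum_tasks_linearCost_eq (fun i j => D' i j (F i j)) (fun i => C' i (G i)) hF hG]
    refine sum_congr rfl fun dm hdm => sum_mul_eq_linearCost (d := dm.1) (σ := (σ · dm))
      (a := fun i j => Lm dm.2 * D' i j (F i j)) (b := fun i j => Lp dm.2 * D' i j (F i j))
      (c := fun i => w i dm.2 * C' i (G i)) (fm := fun i j => tm i dm * φm i (some j) dm)
      (fp := fun i j => tp i dm * φp i j dm) (g := (g · dm)) hEsymm (hσd dm hdm)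
      (fun i => ?_) (fun i hi => ?_) (fun j => by simp [hφpdest dm hdm]) (fun i j hij => ?_)
      (fun i j hi hij => ?_) (fun i => ?_)
    · rw [hg]
      exact outflow_add_eq_inflow_add_of_traffic hEsymm (hφmE · · dm) (t := (tm · dm))
        (s := (r · dm)) (htm dm hdm i) (hφmsum dm hdm i)
    · simpa using outflow_add_eq_inflow_add_of_traffic hEsymm (hφpE · · dm) (t := (tp · dm))
        (s := (g · dm)) (htp dm hdm i) (φ₀ := 0) (by simpa using hφpsum dm hdm i hi)
    · rw [mul_assoc, ← hδms, (hρ_min dm hdm i (some j) (by simp [hij])).2, mul_zero]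
    · rw [mul_assoc, ← hδp, (hσ_min dm hdm i j hi hij).2, mul_zero]
    · rw [hg, mul_assoc, ← hδmn, (hρ_min dm hdm i none (mem_insert_self _ _)).2, mul_zero]
  have hvalue_le : ∑ dm ∈ Tsk, ∑ i, ρ i dm * rstar i dm
      ≤ ∑ e ∈ E, D' e.1 e.2 (F e.1 e.2) * F' e.1 e.2 + ∑ i, C' i (G i) * G' i := by
    rw [← sum_tasks_linearCost_eq (fun i j => D' i j (F i j)) (fun i => C' i (G i)) hF' hG']
    refine sum_le_sum fun dm hdm => sum_mul_le_linearCost (d := dm.1) (σ := (σ · dm))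
      (a := fun i j => Lm dm.2 * D' i j (F i j)) (b := fun i j => Lp dm.2 * D' i j (F i j))
      (c := fun i => w i dm.2 * C' i (G i)) hEsymm (hσd dm hdm) (hfm'c dm hdm)
      (hfp'c dm hdm) (hfp'd dm hdm) (hfm'0 · · dm) (hfp'0 · · dm) (hg'0 · dm)
      (fun i j hij => ?_) (fun i j hi hij => ?_) (fun i => ?_)
    · exact hδms i j dm ▸ (hρ_min dm hdm i (some j) (by simp [hij])).1
    · exact hδp i j dm ▸ (hσ_min dm hdm i j hi hij).1
    · exact hδmn i dm ▸ (hρ_min dm hdm i none (mem_insert_self _ _)).1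
  have hutility : ∑ i, ∑ dm ∈ Tsk, U i dm (rstar i dm) - ∑ i, ∑ dm ∈ Tsk, U i dm (r i dm)
      ≤ ∑ dm ∈ Tsk, ∑ i, ρ i dm * rstar i dm - ∑ dm ∈ Tsk, ∑ i, ρ i dm * r i dm := by
    rw [sum_comm (s := Tsk), sum_comm (s := Tsk)]
    refine sum_sub_sum_le_sum_sub_sum fun i _ => sum_sub_sum_le_sum_sub_sum fun dm hdm => ?_
    rw [← mul_sub]
    exact (hUconc i dm).sub_le_mul_sub_of_threshold (hr_mem i dm) (hrstar i dm)
      (hUderiv i dm _ (hr_mem i dm)) (hthr1 dm hdm i) (hthr2 dm hdm i)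
  have hlink := sum_mul_sub_sum_mul_le_of_convexOn (s := E) (fun e _ => hDconv e.1 e.2)
    (fun e _ => hDderiv e.1 e.2) (fun e => F e.1 e.2) (fun e => F' e.1 e.2)
  have hcpu := sum_mul_sub_sum_mul_le_of_convexOn (s := univ) (fun i _ => hCconv i)
    (fun i _ => hCderiv i) G G'
  linarith

/-- Theorem 4 (congestion-control sufficiency): if the admitted rates `r ∈ [0, r̄]` and the
feasible strategy `φ` satisfy the sufficiency condition (8) together with the admission
threshold conditions (`r_i(d,m) > 0 ⟹ ρ_i(d,m) ≤ U'_{idm}(r_i(d,m))` and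
`r_i(d,m) < r̄_i(d,m) ⟹ ρ_i(d,m) ≥ U'_{idm}(r_i(d,m))`), then `(r, φ)` maximizes
utility-minus-cost over all admitted rates `r* ∈ [0, r̄]` and all flow-feasible competitors at
input rates `r*`. -/
theorem stmt_11
    {V M : Type*} [Fintype V] [DecidableEq V] [Fintype M] [DecidableEq M]
    -- network
    (E : Finset (V × V))
    (hEsymm : ∀ i j : V, (i, j) ∈ E → (j, i) ∈ E)
    (hEirrefl : ∀ i : V, (i, i) ∉ E)
    (Tsk : Finset (V × M))
    (Lm Lp : M → ℝ) (hLm : ∀ m, 0 < Lm m) (hLp : ∀ m, 0 < Lp m)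
    (w : V → M → ℝ) (hw : ∀ i m, 0 < w i m)
    (r : V → V × M → ℝ)
    -- demand limits and utilities
    (rbar : V → V × M → ℝ) (hrbar : ∀ i dm, 0 ≤ rbar i dm)
    (U U' : V → V × M → ℝ → ℝ)
    (hUmono : ∀ i dm, MonotoneOn (U i dm) (Set.Icc 0 (rbar i dm)))
    (hUconc : ∀ i dm, ConcaveOn ℝ (Set.Icc 0 (rbar i dm)) (U i dm))
    (hUderiv : ∀ i dm, ∀ x ∈ Set.Icc 0 (rbar i dm),
      HasDerivWithinAt (U i dm) (U' i dm x) (Set.Icc 0 (rbar i dm)) x)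
    (hU0 : ∀ i dm, U i dm 0 = 0)
    -- admitted rates
    (hr_mem : ∀ i dm, r i dm ∈ Set.Icc 0 (rbar i dm))
    -- feasible forwarding strategy
    (φm : V → Option V → V × M → ℝ) (φp : V → V → V × M → ℝ)
    (hφm0 : ∀ i j dm, 0 ≤ φm i j dm) (hφm1 : ∀ i j dm, φm i j dm ≤ 1)
    (hφp0 : ∀ i j dm, 0 ≤ φp i j dm) (hφp1 : ∀ i j dm, φp i j dm ≤ 1)
    (hφmE : ∀ i j dm, (i, j) ∉ E → φm i (some j) dm = 0)
    (hφpE : ∀ i j dm, (i, j) ∉ E → φp i j dm = 0)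
    (hφmsum : ∀ dm ∈ Tsk, ∀ i : V, φm i none dm + ∑ j, φm i (some j) dm = 1)
    (hφpsum : ∀ dm ∈ Tsk, ∀ i : V, i ≠ dm.1 → ∑ j, φp i j dm = 1)
    (hφpdest : ∀ dm ∈ Tsk, ∀ j, φp dm.1 j dm = 0)
    -- traffic vectors
    (tm tp : V → V × M → ℝ)
    (htm0 : ∀ i dm, 0 ≤ tm i dm) (htp0 : ∀ i dm, 0 ≤ tp i dm)
    (g : V → V × M → ℝ) (hg : ∀ i dm, g i dm = tm i dm * φm i none dm)
    (htm : ∀ dm ∈ Tsk, ∀ i : V, tm i dm = r i dm + ∑ j, tm j dm * φm j (some i) dm)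
    (htp : ∀ dm ∈ Tsk, ∀ i : V, tp i dm = g i dm + ∑ j, tp j dm * φp j i dm)
    -- link flows and workloads
    (F : V → V → ℝ)
    (hF : ∀ i j, F i j = ∑ dm ∈ Tsk,
      (Lm dm.2 * (tm i dm * φm i (some j) dm) + Lp dm.2 * (tp i dm * φp i j dm)))
    (G : V → ℝ) (hG : ∀ i, G i = ∑ dm ∈ Tsk, w i dm.2 * g i dm)
    -- costs
    (D D' : V → V → ℝ → ℝ) (C C' : V → ℝ → ℝ)
    (hDmono : ∀ i j, Monotone (D i j))
    (hDconv : ∀ i j, ConvexOn ℝ Set.univ (D i j))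
    (hDderiv : ∀ i j x, HasDerivAt (D i j) (D' i j x) x)
    (hCmono : ∀ i, Monotone (C i))
    (hCconv : ∀ i, ConvexOn ℝ Set.univ (C i))
    (hCderiv : ∀ i x, HasDerivAt (C i) (C' i x) x)
    -- marginal vectors
    (σ ρ : V → V × M → ℝ)
    (hσd : ∀ dm ∈ Tsk, σ dm.1 dm = 0)
    (hσ : ∀ dm ∈ Tsk, ∀ i : V, i ≠ dm.1 →
      σ i dm = ∑ j ∈ univ.filter (fun j => (i, j) ∈ E),
        φp i j dm * (Lp dm.2 * D' i j (F i j) + σ j dm))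
    (hρ : ∀ dm ∈ Tsk, ∀ i : V,
      ρ i dm = (∑ j ∈ univ.filter (fun j => (i, j) ∈ E),
          φm i (some j) dm * (Lm dm.2 * D' i j (F i j) + ρ j dm))
        + φm i none dm * (w i dm.2 * C' i (G i) + σ i dm))

    -- marginal link/CPU costs
    (δm : V → Option V → V × M → ℝ) (δp : V → V → V × M → ℝ)
    (hδms : ∀ i j dm, δm i (some j) dm = Lm dm.2 * D' i j (F i j) + ρ j dm)
    (hδmn : ∀ i dm, δm i none dm = w i dm.2 * C' i (G i) + σ i dm)
    (hδp : ∀ i j dm, δp i j dm = Lp dm.2 * D' i j (F i j) + σ j dm)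
    -- sufficiency condition (8)
    (hsuffm : ∀ dm ∈ Tsk, ∀ i : V,
      ∀ j ∈ insert (none : Option V) ((univ.filter (fun j => (i, j) ∈ E)).image some),
        0 < φm i j dm →
        ∀ k ∈ insert (none : Option V) ((univ.filter (fun j => (i, j) ∈ E)).image some),
          δm i j dm ≤ δm i k dm)
    (hsuffp : ∀ dm ∈ Tsk, ∀ i : V, i ≠ dm.1 →
      ∀ j : V, (i, j) ∈ E → 0 < φp i j dm →
        ∀ k : V, (i, k) ∈ E → δp i j dm ≤ δp i k dm)
    -- admission threshold conditions (b)
    (hthr1 : ∀ dm ∈ Tsk, ∀ i : V, 0 < r i dm → ρ i dm ≤ U' i dm (r i dm))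
    (hthr2 : ∀ dm ∈ Tsk, ∀ i : V, r i dm < rbar i dm → U' i dm (r i dm) ≤ ρ i dm)
    -- competitor admitted rates
    (rstar : V → V × M → ℝ) (hrstar : ∀ i dm, rstar i dm ∈ Set.Icc 0 (rbar i dm))
    -- flow-feasible competitor
    (fm' fp' : V → V → V × M → ℝ) (g' : V → V × M → ℝ)
    (hfm'0 : ∀ i j dm, 0 ≤ fm' i j dm) (hfp'0 : ∀ i j dm, 0 ≤ fp' i j dm)
    (hg'0 : ∀ i dm, 0 ≤ g' i dm)
    (hfm'E : ∀ i j dm, (i, j) ∉ E → fm' i j dm = 0)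
    (hfp'E : ∀ i j dm, (i, j) ∉ E → fp' i j dm = 0)
    (hfm'c : ∀ dm ∈ Tsk, ∀ i : V,
      (∑ j ∈ univ.filter (fun j => (i, j) ∈ E), fm' i j dm) + g' i dm
        = (∑ j ∈ univ.filter (fun j => (i, j) ∈ E), fm' j i dm) + rstar i dm)
    (hfp'c : ∀ dm ∈ Tsk, ∀ i : V, i ≠ dm.1 →
      (∑ j ∈ univ.filter (fun j => (i, j) ∈ E), fp' i j dm)
        = (∑ j ∈ univ.filter (fun j => (i, j) ∈ E), fp' j i dm) + g' i dm)
    (hfp'd : ∀ dm ∈ Tsk, ∀ j, fp' dm.1 j dm = 0)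
    (F' : V → V → ℝ)
    (hF' : ∀ i j, F' i j = ∑ dm ∈ Tsk, (Lm dm.2 * fm' i j dm + Lp dm.2 * fp' i j dm))
    (G' : V → ℝ) (hG' : ∀ i, G' i = ∑ dm ∈ Tsk, w i dm.2 * g' i dm)
    :
    (∑ i, ∑ dm ∈ Tsk, U i dm (rstar i dm))
      - ((∑ e ∈ E, D e.1 e.2 (F' e.1 e.2)) + ∑ i, C i (G' i))
      ≤ (∑ i, ∑ dm ∈ Tsk, U i dm (r i dm))
      - ((∑ e ∈ E, D e.1 e.2 (F e.1 e.2)) + ∑ i, C i (G i)) :=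
  stmt_11_general E hEsymm Tsk Lm Lp w r rbar U U' hUconc hUderiv hr_mem φm φp hφm0 hφp0 hφmE hφpE
    hφmsum hφpsum hφpdest tm tp g hg htm htp F hF G hG D D' C C' hDconv hDderiv hCconv hCderiv σ ρ
    hσd hσ hρ δm δp hδms hδmn hδp hsuffm hsuffp hthr1 hthr2 rstar hrstar fm' fp' g' hfm'0 hfp'0 hg'0
    hfm'c hfp'c hfp'd F' hF' G' hG'
end

section
/- Let V be a finite set, r : V → ℝ with r_i ≥ 0 for all i, and nonnegative reals φ_{ji} for j, i ∈ V with Σ_{i∈V} φ_{ji} ≤ 1 for every j. Assume the directed graph on V with edge set {(j,i) : φ_{ji} > 0} contains no directed cycle. Then there exists a unique function t : V → ℝ satisfying t_i = r_i + Σ_{j∈V} t_j φ_{ji} for every i ∈ V, and this unique solution satisfies t_i ≥ 0 for all i. -/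
/-- Well-posedness of the traffic equations: for a loop-free (acyclic-support) substochastic
forwarding strategy and nonnegative input rates, the node traffic
`t_i = r_i + Σ_j t_j φ_{ji}` is uniquely determined, and the unique solution is nonnegative. -/
theorem stmt_16 {V : Type*} [Fintype V] [DecidableEq V]
    (r : V → ℝ) (hr : ∀ i, 0 ≤ r i)
    (φ : V → V → ℝ) (hφ0 : ∀ j i, 0 ≤ φ j i)
    (hφsub : ∀ j, ∑ i, φ j i ≤ 1)
    (hacyc : ∀ j : V, ¬ Relation.TransGen (fun a b => 0 < φ a b) j j) :
    (∃! t : V → ℝ, ∀ i, t i = r i + ∑ j, t j * φ j i) ∧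
      (∀ t : V → ℝ, (∀ i, t i = r i + ∑ j, t j * φ j i) → ∀ i, 0 ≤ t i) := by
  classical
  set R : V → V → Prop := fun a b => 0 < φ a b with hR
  have hwfT : WellFounded (Relation.TransGen R) := by
    haveI : IsTrans V (Relation.TransGen R) := ⟨fun _ _ _ => Relation.TransGen.trans⟩
    haveI : IsIrrefl V (Relation.TransGen R) := ⟨hacyc⟩
    exact Finite.wellFounded_of_trans_of_irrefl _
  have hwf : WellFounded R := Subrelation.wf (fun h => Relation.TransGen.single h) hwfT
  -- construct the solution by well-founded recursion
  set t : V → ℝ := hwf.fix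
    (fun i IH => r i + ∑ j, if h : R j i then IH j h * φ j i else 0) with ht
  have hteq : ∀ i, t i = r i + ∑ j, t j * φ j i := by
    intro i
    have := hwf.fix_eq
      (fun i IH => r i + ∑ j, if h : R j i then IH j h * φ j i else 0) i
    rw [ht, this]
    congr 1
    apply Finset.sum_congr rfl
    intro j _
    by_cases h : R j i
    · simp [h]
    · have : φ j i = 0 := le_antisymm (not_lt.mp h) (hφ0 j i)
      simp [h, this]
  have huniq : ∀ s : V → ℝ, (∀ i, s i = r i + ∑ j, s j * φ j i) → s = t := by
    intro s hs
    funext i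
    induction i using hwf.induction with
    | _ i IH =>
      rw [hs i, hteq i]
      congr 1
      apply Finset.sum_congr rfl
      intro j _
      by_cases h : R j i
      · rw [IH j h]
      · have : φ j i = 0 := le_antisymm (not_lt.mp h) (hφ0 j i)
        simp [this]
  have hnonneg : ∀ s : V → ℝ, (∀ i, s i = r i + ∑ j, s j * φ j i) → ∀ i, 0 ≤ s i := by
    intro s hs i
    induction i using hwf.induction with
    | _ i IH =>
      rw [hs i]
      have : 0 ≤ ∑ j, s j * φ j i := by
        apply Finset.sum_nonneg
        intro j _
        by_cases h : R j i
        · exact mul_nonneg (IH j h) (hφ0 j i)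
        · have : φ j i = 0 := le_antisymm (not_lt.mp h) (hφ0 j i)
          simp [this]
      linarith [hr i]
  exact ⟨⟨t, hteq, huniq⟩, hnonneg⟩
end
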